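/- arXiv:1812.05037 — 3 statements merged into one kernel-verified Lean document; each statement's English description precedes it below -/
import Mathlib

section
/- Let φ be a flow on a metric space, K an attractor, and x a point whose omega-limit set satisfies ∅ ≠ ω(x) ⊆ K and whose negative omega-limit set satisfies ∅ ≠ ω*(x) ⊆ K. Then the set K ∪ {φ(x,t) : t ∈ ℝ} is a compact invariant set. -/
/-!
Invariance is immediate from the flow property. For compactness, cover `K` by finitely many
members of an open cover and let `U` be their union. By stability some open `V ⊇ K` flows
forward into `U`. A point `q ∈ ω*(x) ∩ K` lies in `V`, so the backward orbit of `x` enters `V`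
at arbitrarily negative times; flowing forward from there, every point of the orbit lies in `U`.
-/

open Set Topology
open Set Topology

/-- The omega-limit set of a point under a flow. -/
def omegaLim {M : Type*} [MetricSpace M] (φ : M → ℝ → M) (x : M) : Set M :=
  ⋂ t ∈ Set.Ioi (0 : ℝ), closure {y | ∃ s ≥ t, φ x s = y}

/-- A set is invariant under the flow. -/
def IsInvariantSet {M : Type*} [MetricSpace M] (φ : M → ℝ → M) (S : Set M) : Prop :=
  ∀ t : ℝ, (fun y => φ y t) '' S = S

/-- `K` is an attractor: a compact invariant set that is stable and attracting. -/
def IsAttractor {M : Type*} [MetricSpace M] (φ : M → ℝ → M) (K : Set M) : Prop :=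
  IsCompact K ∧ IsInvariantSet φ K ∧
  -- stability
  (∀ U : Set M, IsOpen U → K ⊆ U →
    ∃ V : Set M, IsOpen V ∧ K ⊆ V ∧ ∀ x ∈ V, ∀ t ≥ (0 : ℝ), φ x t ∈ U) ∧
  -- attracting
  (∃ U : Set M, IsOpen U ∧ K ⊆ U ∧
    ∀ x ∈ U, (omegaLim φ x).Nonempty ∧ omegaLim φ x ⊆ K)

/-- The basin of attraction of `K`. -/
def basin {M : Type*} [MetricSpace M] (φ : M → ℝ → M) (K : Set M) : Set M :=
  {x | (omegaLim φ x).Nonempty ∧ omegaLim φ x ⊆ K}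

/-- The negative omega-limit set of a point under a flow. -/
def omegaLimNeg {M : Type*} [MetricSpace M] (φ : M → ℝ → M) (x : M) : Set M :=
  ⋂ t ∈ Set.Iio (0 : ℝ), closure {y | ∃ s ≤ t, φ x s = y}

theorem IsCompact.union_of_subset_of_isOpen {X : Type*} [TopologicalSpace X] {K S : Set X}
    (hK : IsCompact K) (hS : ∀ U, IsOpen U → K ⊆ U → S ⊆ U) : IsCompact (K ∪ S) := by
  refine isCompact_of_finite_subcover fun U hU hcover => ?_
  obtain ⟨t, ht⟩ := hK.elim_finite_subcover U hU fun y hy => hcover (Or.inl hy)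
  exact ⟨t, union_subset ht (hS _ (isOpen_biUnion fun i _ => hU i) ht)⟩

theorem image_range_flow {α : Type*} {φ : α → ℝ → α}
    (hadd : ∀ x s t, φ (φ x s) t = φ x (s + t)) (x : α) (t : ℝ) :
    (fun y => φ y t) '' range (φ x) = range (φ x) := by
  rw [← range_comp]
  simp only [Function.comp_def, hadd]
  exact (Equiv.addRight t).surjective.range_comp (φ x)

section Flow

variable {M : Type*} [MetricSpace M] {φ : M → ℝ → M}

def IsStable (φ : M → ℝ → M) (K : Set M) : Prop :=
  ∀ U : Set M, IsOpen U → K ⊆ U →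
    ∃ V : Set M, IsOpen V ∧ K ⊆ V ∧ ∀ x ∈ V, ∀ t ≥ (0 : ℝ), φ x t ∈ U

theorem IsAttractor.isStable {K : Set M} (hK : IsAttractor φ K) : IsStable φ K :=
  hK.2.2.1

theorem isInvariantSet_range (hadd : ∀ x s t, φ (φ x s) t = φ x (s + t)) (x : M) :
    IsInvariantSet φ (range (φ x)) :=
  image_range_flow hadd x

theorem IsInvariantSet.union {S T : Set M} (hS : IsInvariantSet φ S) (hT : IsInvariantSet φ T) :
    IsInvariantSet φ (S ∪ T) := fun t => by
  rw [image_union, hS t, hT t]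

theorem exists_le_mem_of_mem_omegaLimNeg {x q : M} (hq : q ∈ omegaLimNeg φ x) {V : Set M}
    (hV : IsOpen V) (hqV : q ∈ V) (r : ℝ) : ∃ s ≤ r, φ x s ∈ V := by
  have hneg : min r (-1) ∈ Iio (0 : ℝ) := (min_le_right r (-1)).trans_lt (by norm_num)
  have hcl : q ∈ closure {y | ∃ s ≤ min r (-1), φ x s = y} := mem_iInter₂.mp hq _ hneg
  obtain ⟨_, hV', s, hs, rfl⟩ := mem_closure_iff.mp hcl V hV hqV
  exact ⟨s, hs.trans (min_le_left _ _), hV'⟩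

theorem IsStable.range_subset_of_mem_omegaLimNeg {K : Set M} (hstab : IsStable φ K)
    (hadd : ∀ x s t, φ (φ x s) t = φ x (s + t)) {x q : M} (hq : q ∈ omegaLimNeg φ x)
    (hqK : q ∈ K) {U : Set M} (hU : IsOpen U) (hKU : K ⊆ U) : range (φ x) ⊆ U := by
  rintro _ ⟨r, rfl⟩
  obtain ⟨V, hVopen, hKV, hVU⟩ := hstab U hU hKU
  obtain ⟨s, hsr, hsV⟩ := exists_le_mem_of_mem_omegaLimNeg hq hVopen (hKV hqK) r
  simpa only [hadd, add_sub_cancel] using hVU _ hsV (r - s) (sub_nonneg.mpr hsr)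

end Flow

theorem attractor_union_orbit_compact_invariant_general
    {M : Type*} [MetricSpace M] (φ : M → ℝ → M)
    (hadd : ∀ x s t, φ (φ x s) t = φ x (s + t))
    (K : Set M) (hK : IsAttractor φ K)
    (x : M)
    (hω' : (omegaLimNeg φ x).Nonempty ∧ omegaLimNeg φ x ⊆ K) :
    IsCompact (K ∪ {y | ∃ t : ℝ, φ x t = y}) ∧
      IsInvariantSet φ (K ∪ {y | ∃ t : ℝ, φ x t = y}) := by
  obtain ⟨q, hq⟩ := hω'.1
  exact ⟨hK.1.union_of_subset_of_isOpen fun U hU hKU =>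
      hK.isStable.range_subset_of_mem_omegaLimNeg hadd hq (hω'.2 hq) hU hKU,
    hK.2.1.union (isInvariantSet_range hadd x)⟩

/-- If both limit sets of a point are nonempty and contained in an attractor K,
then K together with the full trajectory of the point is a compact invariant set. -/
theorem attractor_union_orbit_compact_invariant
    {M : Type*} [MetricSpace M] (φ : M → ℝ → M)
    (hcont : Continuous fun p : M × ℝ => φ p.1 p.2)
    (h0 : ∀ x, φ x 0 = x)
    (hadd : ∀ x s t, φ (φ x s) t = φ x (s + t))
    (K : Set M) (hK : IsAttractor φ K)
    (x : M)
    (hω : (omegaLim φ x).Nonempty ∧ omegaLim φ x ⊆ K)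
    (hω' : (omegaLimNeg φ x).Nonempty ∧ omegaLimNeg φ x ⊆ K) :
    IsCompact (K ∪ {y | ∃ t : ℝ, φ x t = y}) ∧
      IsInvariantSet φ (K ∪ {y | ∃ t : ℝ, φ x t = y}) :=
  attractor_union_orbit_compact_invariant_general φ hadd K hK x hω'
end

section
/- Let φ be a flow on a metric space, let H be a compact set, and let x_n be a sequence of points with times t_n → -∞ such that φ(x_n, [t_n, 0]) ⊆ H for all n, x_n → x, and φ(x_n, t_n) → y. Then φ(y, t) ∈ H for every t ≥ 0. -/
open Set Topology Filter

theorem forward_orbit_in_compact_general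
    {M : Type*} [MetricSpace M] (φ : M → ℝ → M)
    (hcont : Continuous fun p : M × ℝ => φ p.1 p.2)
    (hadd : ∀ x s t, φ (φ x s) t = φ x (s + t))
    (H : Set M) (hH : IsCompact H)
    (x y : M) (xs : ℕ → M) (ts : ℕ → ℝ)
    (hts : Tendsto ts atTop atBot)
    (hin : ∀ n, ∀ s ∈ Set.Icc (ts n) (0 : ℝ), φ (xs n) s ∈ H)
    (hy : Tendsto (fun n => φ (xs n) (ts n)) atTop (nhds y)) :
    ∀ t ≥ (0 : ℝ), φ y t ∈ H := by
  intro t ht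
  have hflow_t : Continuous (φ · t) := hcont.comp (continuous_id.prodMk continuous_const)
  have hlim : Tendsto (fun n => φ (φ (xs n) (ts n)) t) atTop (𝓝 (φ y t)) :=
    (hflow_t.tendsto y).comp hy
  -- once `ts n ≤ -t`, the point `φ (xs n) (ts n + t)` lies on the arc `φ (xs n) [ts n, 0] ⊆ H`
  have hmem : ∀ᶠ n in atTop, φ (φ (xs n) (ts n)) t ∈ H := by
    filter_upwards [hts.eventually_le_atBot (-t)] with n hn
    rw [hadd]
    exact hin n (ts n + t) ⟨by linarith, by linarith⟩
  exact hH.isClosed.mem_of_tendsto hlim hmem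

/-- If `t n → -∞`, `φ(x n, [t n, 0]) ⊆ H` with `H` compact, `x n → x` and
`φ(x n, t n) → y`, then the forward trajectory of `y` stays in `H`. -/
theorem forward_orbit_in_compact
    {M : Type*} [MetricSpace M] (φ : M → ℝ → M)
    (hcont : Continuous fun p : M × ℝ => φ p.1 p.2)
    (h0 : ∀ x, φ x 0 = x)
    (hadd : ∀ x s t, φ (φ x s) t = φ x (s + t))
    (H : Set M) (hH : IsCompact H)
    (x y : M) (xs : ℕ → M) (ts : ℕ → ℝ)
    (hts : Tendsto ts atTop atBot)
    (hin : ∀ n, ∀ s ∈ Set.Icc (ts n) (0 : ℝ), φ (xs n) s ∈ H)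
    (hx : Tendsto xs atTop (nhds x))
    (hy : Tendsto (fun n => φ (xs n) (ts n)) atTop (nhds y)) :
    ∀ t ≥ (0 : ℝ), φ y t ∈ H :=
  forward_orbit_in_compact_general φ hcont hadd H hH x y xs ts hts hin hy
end

section
/- Let K be a compact invariant set of a flow, (A, R) an attractor-repeller decomposition of K, and (A', R') an attractor-repeller decomposition of R (for the flow restricted to R). Then {A, A', R'} (in this order) is a Morse decomposition of K. -/
/-!
Forward in time, points outside `R` go to `A`, and points of `R` outside `R'` go to `A'`; backward
in time, points of `K \ A` go to `R` and points of `R \ A'` go to `R'`. What remains is that the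
α-limit set of a point outside `R`, which lies in `R`, is contained in `A'` as soon as it meets `A'`
(if it misses `A'`, it lies in `R'`, being closed and invariant). If it contains `a ∈ A'` and `z ∉ A'`, take the last visit of the backward
orbit to a small closed neighbourhood of `A'` before each of infinitely many passages near `z`.
A limit `p` of these points lies in the α-limit set, hence in `R`, and either reaches `z` in finite
time, contradicting the stability of `A'` within `R`, or never re-enters the neighbourhood,
contradicting the attraction of `A'` within `R`.
-/

open Set Topology
open Set Topology

/-- `Ms : Fin n → Set M` is a Morse decomposition of the compact invariant set `K`. -/
def IsMorseDecomposition {M : Type*} [MetricSpace M] (φ : M → ℝ → M)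
    (K : Set M) {n : ℕ} (Ms : Fin n → Set M) : Prop :=
  (∀ i j, i ≠ j → Disjoint (Ms i) (Ms j)) ∧
  (∀ i, Ms i ⊆ K ∧ IsCompact (Ms i) ∧ IsInvariantSet φ (Ms i)) ∧
  (∀ x ∈ K \ ⋃ i, Ms i, ∃ j k : Fin n, j < k ∧
    omegaLim φ x ⊆ Ms j ∧ omegaLimNeg φ x ⊆ Ms k)

/-- `A` is an attractor for the flow restricted to the compact invariant set `K`. -/
def IsAttractorIn {M : Type*} [MetricSpace M] (φ : M → ℝ → M) (K A : Set M) : Prop :=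
  A ⊆ K ∧ IsCompact A ∧ IsInvariantSet φ A ∧
  -- attracting in K
  (∃ U : Set M, IsOpen U ∧ A ⊆ U ∧
    ∀ x ∈ K ∩ U, (omegaLim φ x).Nonempty ∧ omegaLim φ x ⊆ A) ∧
  -- stable in K
  (∀ U : Set M, IsOpen U → A ⊆ U →
    ∃ V : Set M, IsOpen V ∧ A ⊆ V ∧ ∀ x ∈ K ∩ V, ∀ t ≥ (0 : ℝ), φ x t ∈ U)

/-- `(A, R)` is an attractor-repeller decomposition of `K`: `A` is an attractor
of the restricted flow and `R` is its dual repeller. -/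
def IsARDecomposition {M : Type*} [MetricSpace M] (φ : M → ℝ → M)
    (K A R : Set M) : Prop :=
  IsAttractorIn φ K A ∧ R = {x ∈ K | omegaLim φ x ∩ A = ∅}

open Filter

theorem exists_last_mem_of_continuous {X : Type*} [TopologicalSpace X] {f : ℝ → X}
    (hf : Continuous f) {C : Set X} (hC : IsClosed C) {a b : ℝ} (hab : a ≤ b) (ha : f a ∈ C) :
    ∃ t ∈ Icc a b, f t ∈ C ∧ ∀ s ∈ Ioc t b, f s ∉ C := by
  obtain ⟨t, ⟨htab, htC⟩, hmax⟩ :=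
    (isCompact_Icc.inter_right (hC.preimage hf)).exists_isGreatest ⟨a, left_mem_Icc.2 hab, ha⟩
  exact ⟨t, htab, htC, fun s hs hsC => (hmax ⟨⟨htab.1.trans hs.1.le, hs.2⟩, hsC⟩).not_gt hs.1⟩

section OmegaLimits

variable {M : Type*} [MetricSpace M] {φ : M → ℝ → M} {x y z : M} {S C : Set M}

theorem IsInvariantSet.flow_mem (hS : IsInvariantSet φ S) (hx : x ∈ S) (t : ℝ) : φ x t ∈ S :=
  hS t ▸ mem_image_of_mem _ hx

theorem isInvariantSet_of_forall_flow_mem (h0 : ∀ x, φ x 0 = x)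
    (hadd : ∀ x s t, φ (φ x s) t = φ x (s + t)) (h : ∀ x ∈ S, ∀ t, φ x t ∈ S) :
    IsInvariantSet φ S := by
  refine fun t => Subset.antisymm (image_subset_iff.2 fun x hx => h x hx t) fun y hy => ?_
  exact ⟨φ y (-t), h y hy (-t), show φ (φ y (-t)) t = y by rw [hadd, neg_add_cancel, h0]⟩

theorem mem_omegaLim_iff_mapClusterPt : y ∈ omegaLim φ x ↔ MapClusterPt y atTop (φ x) := by
  simp only [omegaLim, mem_iInter₂, mem_Ioi, mapClusterPt_atTop_iff_forall_mem_closure]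
  refine ⟨fun h t => closure_mono ?_ (h _ (one_pos.trans_le (le_max_right t 1))), fun h t _ => h t⟩
  rintro _ ⟨s, hs, rfl⟩
  exact ⟨s, (le_max_left t 1).trans hs, rfl⟩

theorem mem_omegaLimNeg_iff_mapClusterPt :
    y ∈ omegaLimNeg φ x ↔ MapClusterPt y atBot (φ x) := by
  simp only [omegaLimNeg, mem_iInter₂, mem_Iio, mapClusterPt_def,
    clusterPt_iff_forall_mem_closure, mem_map, mem_atBot_sets]
  refine ⟨fun h s ⟨t, ht⟩ => closure_mono ?_ (h _ ((min_le_right t (-1)).trans_lt (by norm_num))),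
    fun h t _ => h _ ⟨t, fun s hs => ⟨s, hs, rfl⟩⟩⟩
  rintro _ ⟨s, hs, rfl⟩
  exact ht s (hs.trans (min_le_left _ _))

theorem isClosed_omegaLimNeg (x : M) : IsClosed (omegaLimNeg φ x) :=
  isClosed_biInter fun _ _ => isClosed_closure

theorem omegaLim_flow (hadd : ∀ x s t, φ (φ x s) t = φ x (s + t)) (x : M) (u : ℝ) :
    omegaLim φ (φ x u) = omegaLim φ x := by
  have hshift : φ (φ x u) = φ x ∘ fun s => s + u := funext fun s => by simp [hadd, add_comm]
  ext y
  rw [mem_omegaLim_iff_mapClusterPt, mem_omegaLim_iff_mapClusterPt, hshift, mapClusterPt_comp,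
    map_add_atTop_eq]

theorem flow_mem_omegaLimNeg (hcont : Continuous fun p : M × ℝ => φ p.1 p.2)
    (hadd : ∀ x s t, φ (φ x s) t = φ x (s + t)) (hy : y ∈ omegaLimNeg φ x) (t : ℝ) :
    φ y t ∈ omegaLimNeg φ x := by
  rw [mem_omegaLimNeg_iff_mapClusterPt] at hy ⊢
  have hflow : Continuous fun y => φ y t := hcont.comp (.prodMk_left t)
  have := hy.continuousAt_comp hflow.continuousAt
  have hshift : (fun y => φ y t) ∘ φ x = φ x ∘ fun s => s + t := funext fun s => hadd x s t
  rw [hshift] at this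
  exact this.of_comp (tendsto_atBot_add_const_right _ t tendsto_id)

theorem omegaLim_subset_of_eventually_mem (hC : IsClosed C) (h : ∀ᶠ t in atTop, φ x t ∈ C) :
    omegaLim φ x ⊆ C :=
  fun _ hy => hC.mem_of_mapClusterPt (mem_omegaLim_iff_mapClusterPt.1 hy) h

theorem omegaLimNeg_subset_of_forall_mem (hC : IsClosed C) (h : ∀ t, φ x t ∈ C) :
    omegaLimNeg φ x ⊆ C :=
  fun _ hy => hC.mem_of_mapClusterPt (mem_omegaLimNeg_iff_mapClusterPt.1 hy) (.of_forall h)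

theorem omegaLim_subset_omegaLimNeg (hcont : Continuous fun p : M × ℝ => φ p.1 p.2)
    (hadd : ∀ x s t, φ (φ x s) t = φ x (s + t)) (hz : z ∈ omegaLimNeg φ x) :
    omegaLim φ z ⊆ omegaLimNeg φ x :=
  omegaLim_subset_of_eventually_mem (isClosed_omegaLimNeg x)
    (.of_forall (flow_mem_omegaLimNeg hcont hadd hz))

theorem exists_flow_eq_or_forall_flow_mem (hcont : Continuous fun p : M × ℝ => φ p.1 p.2)
    {p : ℕ → M} {τ : ℕ → ℝ} {p₀ : M} (hC : IsClosed C)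
    (hp : Tendsto p atTop (𝓝 p₀)) (hτ : ∀ n, 0 ≤ τ n)
    (hz : Tendsto (fun n => φ (p n) (τ n)) atTop (𝓝 z))
    (hpC : ∀ n, ∀ u ∈ Ioc 0 (τ n), φ (p n) u ∈ C) :
    (∃ τ₀ ≥ 0, φ p₀ τ₀ = z) ∨ ∀ u > 0, φ p₀ u ∈ C := by
  by_cases hbdd : ∃ B, ∃ᶠ n in atTop, τ n ≤ B
  · obtain ⟨B, hB⟩ := hbdd
    obtain ⟨τ₀, hτ₀, ψ, hψ, hτψ⟩ := isCompact_Icc.tendsto_subseq' (hB.mono fun n h => ⟨hτ n, h⟩)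
    refine .inl ⟨τ₀, hτ₀.1, tendsto_nhds_unique ?_ (hz.comp hψ.tendsto_atTop)⟩
    exact (hcont.tendsto (p₀, τ₀)).comp ((hp.comp hψ.tendsto_atTop).prodMk_nhds hτψ)
  · push Not at hbdd
    refine .inr fun u hu => hC.mem_of_tendsto
      ((hcont.tendsto (p₀, u)).comp (hp.prodMk_nhds tendsto_const_nhds)) ?_
    filter_upwards [hbdd u] with n hn
    exact hpC n u ⟨hu, hn.le⟩

end OmegaLimits

namespace IsAttractorIn

variable {M : Type*} [MetricSpace M] {φ : M → ℝ → M} {K A : Set M} {x : M}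

theorem omegaLimNeg_subset_of_inter_nonempty (hcont : Continuous fun p : M × ℝ => φ p.1 p.2)
    (hadd : ∀ x s t, φ (φ x s) t = φ x (s + t)) {L : Set M} (hL : IsCompact L)
    (horb : ∀ t, φ x t ∈ L) (hαK : omegaLimNeg φ x ⊆ K) (hA : IsAttractorIn φ K A)
    (hmeet : (omegaLimNeg φ x ∩ A).Nonempty) : omegaLimNeg φ x ⊆ A := by
  obtain ⟨-, hAc, -, ⟨U, hUo, hAU, hUatt⟩, hstab⟩ := hA
  obtain ⟨a, ha, haA⟩ := hmeet
  intro z hz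
  by_contra hzA
  obtain ⟨W, hWo, hAW, hW⟩ := hstab {z}ᶜ isOpen_compl_singleton fun b hb h => hzA (h ▸ hb)
  obtain ⟨V, hVo, hAV, hVcl⟩ :=
    normal_exists_closure_subset hAc.isClosed (hUo.inter hWo) (subset_inter hAU hAW)
  obtain ⟨r, hrz, hr⟩ := (mem_omegaLimNeg_iff_mapClusterPt.1 hz).exists_seq_tendsto
  have hlast : ∀ n, ∃ t ≤ r n, φ x t ∈ closure V ∧ ∀ s ∈ Ioc t (r n), φ x s ∉ closure V := by
    intro n
    obtain ⟨s, hs, hsV⟩ := frequently_atBot.1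
      ((mem_omegaLimNeg_iff_mapClusterPt.1 ha).frequently (hVo.mem_nhds (hAV haA))) (r n)
    obtain ⟨t, ht, htV, hlast⟩ := exists_last_mem_of_continuous (hcont.comp (.prodMk_right x))
      isClosed_closure hs (subset_closure hsV)
    exact ⟨t, ht.2, htV, hlast⟩
  choose t htr htV hlast using hlast
  obtain ⟨p, -, ψ, hψ, hp⟩ := hL.tendsto_subseq fun n => horb (t n)
  have hpα : p ∈ omegaLimNeg φ x := mem_omegaLimNeg_iff_mapClusterPt.2
    (hp.mapClusterPt.of_comp ((tendsto_atBot_mono htr hr).comp hψ.tendsto_atTop))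
  have hpV : p ∈ closure V := isClosed_closure.mem_of_tendsto hp (.of_forall fun n => htV _)
  have hτz : Tendsto (fun n => φ (φ x (t (ψ n))) (r (ψ n) - t (ψ n))) atTop (𝓝 z) := by
    simpa [Function.comp_def, hadd] using hrz.comp hψ.tendsto_atTop
  have hseg : ∀ n, ∀ u ∈ Ioc 0 (r (ψ n) - t (ψ n)), φ (φ x (t (ψ n))) u ∈ Vᶜ := by
    intro n u hu hV
    rw [hadd] at hV
    exact hlast _ _ ⟨by linarith [hu.1], by linarith [hu.2]⟩ (subset_closure hV)
  rcases exists_flow_eq_or_forall_flow_mem hcont hVo.isClosed_compl hp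
    (fun n => sub_nonneg.2 (htr _)) hτz hseg with ⟨τ, hτ, hpz⟩ | hout
  · exact hW p ⟨hαK hpα, (hVcl hpV).2⟩ τ hτ hpz
  · obtain ⟨⟨b, hb⟩, hωA⟩ := hUatt p ⟨hαK hpα, (hVcl hpV).1⟩
    exact omegaLim_subset_of_eventually_mem hVo.isClosed_compl
      ((eventually_gt_atTop 0).mono hout) hb (hAV (hωA hb))

end IsAttractorIn

namespace IsARDecomposition

variable {M : Type*} [MetricSpace M] {φ : M → ℝ → M} {K A R : Set M} {x : M}

theorem repeller_subset (h : IsARDecomposition φ K A R) : R ⊆ K :=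
  h.2 ▸ sep_subset _ _

theorem disjoint (h : IsARDecomposition φ K A R) : Disjoint A R := by
  obtain ⟨⟨hAK, -, -, ⟨U, -, hAU, hUatt⟩, -⟩, rfl⟩ := h
  refine disjoint_left.2 fun x hxA hxR => ?_
  obtain ⟨⟨y, hy⟩, hωA⟩ := hUatt x ⟨hAK hxA, hAU hxA⟩
  exact hxR.2.subset ⟨hy, hωA hy⟩

theorem omegaLim_subset_attractor (hadd : ∀ x s t, φ (φ x s) t = φ x (s + t))
    (hKinv : IsInvariantSet φ K) (h : IsARDecomposition φ K A R) (hxK : x ∈ K) (hxR : x ∉ R) :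
    omegaLim φ x ⊆ A := by
  obtain ⟨⟨-, -, -, ⟨U, hUo, hAU, hUatt⟩, -⟩, rfl⟩ := h
  obtain ⟨a, haω, haA⟩ := nonempty_iff_ne_empty.2 fun h => hxR ⟨hxK, h⟩
  obtain ⟨s, hsU⟩ :=
    ((mem_omegaLim_iff_mapClusterPt.1 haω).frequently (hUo.mem_nhds (hAU haA))).exists
  rw [← omegaLim_flow hadd x s]
  exact (hUatt _ ⟨hKinv.flow_mem hxK s, hsU⟩).2

theorem isCompact_repeller (hcont : Continuous fun p : M × ℝ => φ p.1 p.2)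
    (hadd : ∀ x s t, φ (φ x s) t = φ x (s + t)) (hKc : IsCompact K)
    (hKinv : IsInvariantSet φ K) (h : IsARDecomposition φ K A R) : IsCompact R := by
  refine hKc.of_isClosed_subset ?_ h.repeller_subset
  obtain ⟨⟨-, -, -, ⟨U, hUo, hAU, hUatt⟩, -⟩, rfl⟩ := h
  have hR : {x ∈ K | omegaLim φ x ∩ A = ∅} = K \ ⋃ s : ℝ, (fun y => φ y s) ⁻¹' U := by
    ext x
    simp only [mem_ofPred_eq, Set.mem_sdiff, mem_iUnion, mem_preimage, not_exists]
    refine and_congr_right fun hxK => ⟨fun h s hs => ?_, fun h => ?_⟩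
    · obtain ⟨⟨y, hy⟩, hωA⟩ := hUatt _ ⟨hKinv.flow_mem hxK s, hs⟩
      rw [omegaLim_flow hadd] at hy hωA
      exact h.subset ⟨hy, hωA hy⟩
    · refine eq_empty_iff_forall_notMem.2 fun a ⟨haω, haA⟩ => ?_
      obtain ⟨s, hsU⟩ :=
        ((mem_omegaLim_iff_mapClusterPt.1 haω).frequently (hUo.mem_nhds (hAU haA))).exists
      exact h s hsU
  rw [hR]
  exact hKc.isClosed.sdiff (isOpen_iUnion fun s => hUo.preimage (hcont.comp (.prodMk_left s)))

theorem isInvariantSet_repeller (h0 : ∀ x, φ x 0 = x)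
    (hadd : ∀ x s t, φ (φ x s) t = φ x (s + t)) (hKinv : IsInvariantSet φ K)
    (h : IsARDecomposition φ K A R) : IsInvariantSet φ R := by
  obtain ⟨-, rfl⟩ := h
  exact isInvariantSet_of_forall_flow_mem h0 hadd fun x hx t =>
    ⟨hKinv.flow_mem hx.1 t, by rw [omegaLim_flow hadd]; exact hx.2⟩

theorem omegaLimNeg_subset_repeller (hcont : Continuous fun p : M × ℝ => φ p.1 p.2)
    (h0 : ∀ x, φ x 0 = x) (hadd : ∀ x s t, φ (φ x s) t = φ x (s + t)) (hKc : IsClosed K)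
    (hKinv : IsInvariantSet φ K) (h : IsARDecomposition φ K A R) (hxK : x ∈ K) (hxA : x ∉ A) :
    omegaLimNeg φ x ⊆ R := by
  obtain ⟨⟨-, -, -, -, hstab⟩, rfl⟩ := h
  intro y hy
  refine ⟨omegaLimNeg_subset_of_forall_mem hKc (hKinv.flow_mem hxK) hy,
    eq_empty_iff_forall_notMem.2 fun a ⟨haω, haA⟩ => ?_⟩
  obtain ⟨V, hVo, hAV, hV⟩ := hstab {x}ᶜ isOpen_compl_singleton fun a ha h => hxA (h ▸ ha)
  obtain ⟨s, hs, hsV⟩ := frequently_atTop.1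
    ((mem_omegaLim_iff_mapClusterPt.1 haω).frequently (hVo.mem_nhds (hAV haA))) 0
  have hO : IsOpen ((fun w => φ w s) ⁻¹' V) := hVo.preimage (hcont.comp (.prodMk_left s))
  obtain ⟨r, hr, hrV⟩ := frequently_atBot.1
    ((mem_omegaLimNeg_iff_mapClusterPt.1 hy).frequently (hO.mem_nhds hsV)) (-s)
  have hrV' : φ x (r + s) ∈ V := hadd x r s ▸ hrV
  apply hV _ ⟨hKinv.flow_mem hxK _, hrV'⟩ (-(r + s)) (by linarith)
  rw [hadd, add_neg_cancel, h0]
  rfl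

theorem omegaLimNeg_subset_attractor_or_repeller
    (hcont : Continuous fun p : M × ℝ => φ p.1 p.2) (hadd : ∀ x s t, φ (φ x s) t = φ x (s + t))
    {L : Set M} (hL : IsCompact L) (horb : ∀ t, φ x t ∈ L) (hαK : omegaLimNeg φ x ⊆ K)
    (h : IsARDecomposition φ K A R) : omegaLimNeg φ x ⊆ A ∨ omegaLimNeg φ x ⊆ R := by
  obtain ⟨hA, rfl⟩ := h
  by_cases hmeet : (omegaLimNeg φ x ∩ A).Nonempty
  · exact .inl (hA.omegaLimNeg_subset_of_inter_nonempty hcont hadd hL horb hαK hmeet)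
  · refine .inr fun z hz => ⟨hαK hz, eq_empty_iff_forall_notMem.2 fun b hb => hmeet ?_⟩
    exact ⟨b, omegaLim_subset_omegaLimNeg hcont hadd hz hb.1, hb.2⟩

end IsARDecomposition

theorem isMorseDecomposition_of_three {M : Type*} [MetricSpace M] {φ : M → ℝ → M}
    {K A B C : Set M} (hAB : Disjoint A B) (hAC : Disjoint A C) (hBC : Disjoint B C)
    (hA : A ⊆ K ∧ IsCompact A ∧ IsInvariantSet φ A)
    (hB : B ⊆ K ∧ IsCompact B ∧ IsInvariantSet φ B)
    (hC : C ⊆ K ∧ IsCompact C ∧ IsInvariantSet φ C)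
    (hlim : ∀ x ∈ K, x ∉ A → x ∉ B → x ∉ C →
      omegaLim φ x ⊆ A ∧ (omegaLimNeg φ x ⊆ B ∨ omegaLimNeg φ x ⊆ C) ∨
        omegaLim φ x ⊆ B ∧ omegaLimNeg φ x ⊆ C) :
    IsMorseDecomposition φ K ![A, B, C] := by
  refine ⟨fun i j hij => ?_, fun i => by fin_cases i <;> assumption, fun x ⟨hxK, hx⟩ => ?_⟩
  · fin_cases i <;> fin_cases j
    exacts [absurd rfl hij, hAB, hAC, hAB.symm, absurd rfl hij, hBC, hAC.symm, hBC.symm,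
      absurd rfl hij]
  · have hxi : ∀ i, x ∉ ![A, B, C] i := fun i hi => hx (mem_iUnion.2 ⟨i, hi⟩)
    rcases hlim x hxK (hxi 0) (hxi 1) (hxi 2) with ⟨hω, hα | hα⟩ | ⟨hω, hα⟩
    exacts [⟨0, 1, by decide, hω, hα⟩, ⟨0, 2, by decide, hω, hα⟩, ⟨1, 2, by decide, hω, hα⟩]

theorem morse_from_nested_attractor_repeller_general
    {M : Type*} [MetricSpace M] (φ : M → ℝ → M)
    (hcont : Continuous fun p : M × ℝ => φ p.1 p.2)
    (h0 : ∀ x, φ x 0 = x)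
    (hadd : ∀ x s t, φ (φ x s) t = φ x (s + t))
    (K : Set M) (hK : IsCompact K ∧ IsInvariantSet φ K)
    (A R A' R' : Set M)
    (h1 : IsARDecomposition φ K A R)
    (h2 : IsARDecomposition φ R A' R') :
    IsMorseDecomposition φ K ![A, A', R'] := by
  obtain ⟨hKc, hKinv⟩ := hK
  have hRc := h1.isCompact_repeller hcont hadd hKc hKinv
  have hRinv := h1.isInvariantSet_repeller h0 hadd hKinv
  refine isMorseDecomposition_of_three (h1.disjoint.mono_right h2.1.1)
    (h1.disjoint.mono_right h2.repeller_subset) h2.disjoint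
    ⟨h1.1.1, h1.1.2.1, h1.1.2.2.1⟩ ⟨h2.1.1.trans h1.repeller_subset, h2.1.2.1, h2.1.2.2.1⟩
    ⟨h2.repeller_subset.trans h1.repeller_subset, h2.isCompact_repeller hcont hadd hRc hRinv,
      h2.isInvariantSet_repeller h0 hadd hRinv⟩ fun x hxK hxA hxA' hxR' => ?_
  by_cases hxR : x ∈ R
  · exact .inr ⟨h2.omegaLim_subset_attractor hadd hRinv hxR hxR',
      h2.omegaLimNeg_subset_repeller hcont h0 hadd hRc.isClosed hRinv hxR hxA'⟩
  · refine .inl ⟨h1.omegaLim_subset_attractor hadd hKinv hxK hxR, ?_⟩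
    exact h2.omegaLimNeg_subset_attractor_or_repeller hcont hadd hKc (hKinv.flow_mem hxK)
      (h1.omegaLimNeg_subset_repeller hcont h0 hadd hKc.isClosed hKinv hxK hxA)

/-- If `(A, R)` is an attractor-repeller decomposition of `K` and `(A', R')` is
an attractor-repeller decomposition of `R`, then `{A, A', R'}` is a Morse
decomposition of `K`. -/
theorem morse_from_nested_attractor_repeller
    {M : Type*} [MetricSpace M] [LocallyCompactSpace M] (φ : M → ℝ → M)
    (hcont : Continuous fun p : M × ℝ => φ p.1 p.2)
    (h0 : ∀ x, φ x 0 = x)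
    (hadd : ∀ x s t, φ (φ x s) t = φ x (s + t))
    (K : Set M) (hK : IsCompact K ∧ IsInvariantSet φ K)
    (A R A' R' : Set M)
    (h1 : IsARDecomposition φ K A R)
    (h2 : IsARDecomposition φ R A' R') :
    IsMorseDecomposition φ K ![A, A', R'] :=
  morse_from_nested_attractor_repeller_general φ hcont h0 hadd K hK A R A' R' h1 h2
end
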